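/- For any impartial game with activeness G^g and any option G'^{g'} ∈ G^g, the games G^g and G'^{g'} are not equivalent; in fact the game G^g + ∅^1 distinguishes them. -/

import Mathlib

inductive AGame : Type where
  | mk : List AGame → Bool → AGame

namespace AGame

noncomputable instance : DecidableEq AGame := Classical.decEq _

def opts : AGame → List AGame | mk gs _ => gs
def act : AGame → Bool | mk _ g => g

theorem sizeOf_lt_of_mem {G G' : AGame} (h : G' ∈ G.opts) : sizeOf G' < sizeOf G := by
  cases G with
  | mk gs g =>
    simp only [opts] at h
    have := List.sizeOf_lt_of_mem h
    simp [AGame.mk.sizeOf_spec]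
    omega

/-- Disjunctive sum of games with activeness. -/
def add (G H : AGame) : AGame :=
  mk (G.opts.attach.map (fun x => add x.1 H) ++
      H.opts.attach.map (fun y => add G y.1)) (G.act || H.act)
termination_by sizeOf G + sizeOf H
decreasing_by
  · have := sizeOf_lt_of_mem x.2; omega
  · have := sizeOf_lt_of_mem y.2; omega

/-- `PPos G` means the outcome of `G` is 𝒫 (second player wins). -/
def PPos (G : AGame) : Prop :=
  G.act = false ∨ ∀ G' ∈ G.opts.attach, ¬ PPos G'.1
termination_by sizeOf G
decreasing_by
  have := sizeOf_lt_of_mem G'.2; omega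

/-- Hereditary set-equality (the paper's ≅). -/
def Identical (G H : AGame) : Prop :=
  G.act = H.act ∧ (∀ G' ∈ G.opts.attach, ∃ H' ∈ H.opts.attach, Identical G'.1 H'.1)
              ∧ (∀ H' ∈ H.opts.attach, ∃ G' ∈ G.opts.attach, Identical G'.1 H'.1)
termination_by sizeOf G + sizeOf H
decreasing_by
  · have := sizeOf_lt_of_mem G'.2; have := sizeOf_lt_of_mem H'.2; omega
  · have := sizeOf_lt_of_mem G'.2; have := sizeOf_lt_of_mem H'.2; omega

/-- Equivalence of games with activeness: same outcome in every sum. -/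
def Equiv (G H : AGame) : Prop := ∀ X : AGame, (PPos (add G X) ↔ PPos (add H X))

end AGame

namespace AGame

/-- Nimbers with activeness: `star γ n ≅ {star γ j : j < n}^{γ n}`. -/
def star (γ : ℕ → Bool) : ℕ → AGame
  | n => mk ((List.range n).attach.map (fun j => star γ j.1)) (γ n)
termination_by n => n
decreasing_by
  have := j.2; simp [List.mem_range] at this; omega

/-- The generalized Grundy set `𝒢^γ(G)`. -/
def GSet (γ : ℕ → Bool) (G : AGame) : Set ℕ := {n | PPos (add G (star γ n))}

/-- Minimum excludant of a set of naturals. -/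
noncomputable def mex (S : Set ℕ) : ℕ := sInf {n | n ∉ S}

/-- Ordinary Grundy value, computed ignoring activeness. -/
noncomputable def grundy (G : AGame) : ℕ :=
  mex {m | ∃ G' ∈ G.opts.attach, grundy G'.1 = m}
termination_by sizeOf G
decreasing_by
  have := sizeOf_lt_of_mem G'.2; omega

/-- The three types of games with activeness. -/
inductive AType : Type where
  | inactive : AType            -- type 0
  | activeSomeInactive : AType  -- type 1_{∃0}
  | activeAllActive : AType     -- type 1_{∀1}

open Classical in
/-- `type(G^g)`. -/
noncomputable def typ (G : AGame) : AType :=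
  if G.act = false then .inactive
  else if ∃ G' ∈ G.opts, G'.act = false then .activeSomeInactive
  else .activeAllActive

/-- Formal birthday `b(G)`. -/
def bday (G : AGame) : ℕ :=
  (G.opts.attach.map (fun G' => bday G'.1 + 1)).foldr max 0
termination_by sizeOf G
decreasing_by
  have := sizeOf_lt_of_mem G'.2; omega

/-- An option `G'` of `G` is reversible if it has an option equivalent to `G`. -/
def Reversible (G G' : AGame) : Prop := ∃ G'' ∈ G'.opts, Equiv G'' G

/-- A canonical game: all options canonical and no option reversible. -/
def Canonical (G : AGame) : Prop :=
  (∀ G' ∈ G.opts.attach, Canonical G'.1) ∧ (∀ G' ∈ G.opts, ¬ Reversible G G')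
termination_by sizeOf G
decreasing_by
  have := sizeOf_lt_of_mem G'.2; omega

/-- A transitive game: all options transitive and options of options are options. -/
def TransGame (G : AGame) : Prop :=
  (∀ G' ∈ G.opts.attach, TransGame G'.1) ∧ (∀ G' ∈ G.opts, ∀ G'' ∈ G'.opts, G'' ∈ G.opts)
termination_by sizeOf G
decreasing_by
  have := sizeOf_lt_of_mem G'.2; omega

/-- `G` is covered by `H` if every option of `G` is equivalent to some option of `H`. -/
def Covered (G H : AGame) : Prop := ∀ G' ∈ G.opts, ∃ H' ∈ H.opts, Equiv G' H'

/-- The relation `G ⋈ H`. -/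
def Bowtie (G H : AGame) : Prop :=
  (∀ G' ∈ G.opts, ¬ Equiv G' H) ∧ (∀ H' ∈ H.opts, ¬ Equiv G H')

/-- The linear chain `∅^{g₀ g₁ … gₙ}`. -/
def chain (g : ℕ → Bool) : ℕ → AGame
  | 0 => mk [] (g 0)
  | n + 1 => mk [chain g n] (g (n + 1))

end AGame

/-!
`G + (G + ∅¹)` is a 𝒫-position by the mirror strategy: a move to `G'` in either copy of `G` is
answered by the same move in the other copy, reaching `G' + (G' + ∅¹)`. The summand `∅¹` only keeps
every such sum active, since inactive games are 𝒫-positions outright. From `G' + (G + ∅¹)` the first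
player moves to `G' + (G' + ∅¹)`, so that sum is not a 𝒫-position.
-/

namespace AGame

theorem opts_add (G H : AGame) : (add G H).opts =
    G.opts.attach.map (fun x => add x.1 H) ++ H.opts.attach.map (fun y => add G y.1) := by
  rw [add]; rfl

theorem act_add (G H : AGame) : (add G H).act = (G.act || H.act) := by
  rw [add]; rfl

theorem mem_opts_add {X G H : AGame} : X ∈ (add G H).opts ↔
    (∃ G' ∈ G.opts, X = add G' H) ∨ (∃ H' ∈ H.opts, X = add G H') := by
  simp only [opts_add, List.mem_append, List.mem_map, List.mem_attach, true_and,
    Subtype.exists, exists_prop, eq_comm (a := X)]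

theorem pPos_iff (G : AGame) : PPos G ↔ G.act = false ∨ ∀ G' ∈ G.opts, ¬ PPos G' := by
  rw [PPos]
  simp only [List.mem_attach, true_implies, Subtype.forall]

theorem not_pPos_of_mem_opts {G G' : AGame} (hG : G.act = true) (hG' : G' ∈ G.opts)
    (hP : PPos G') : ¬ PPos G := by
  rw [pPos_iff, hG]
  rintro (h | h)
  exacts [Bool.noConfusion h, h G' hG' hP]

theorem act_add_add_activeEmpty (G H : AGame) : (add G (add H (mk [] true))).act = true := by
  rw [act_add, act_add, act, Bool.or_true, Bool.or_true]

theorem not_pPos_add_add_activeEmpty_of_mem_opts {G G' : AGame} (hG' : G' ∈ G.opts)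
    (hP : PPos (add G' (add G' (mk [] true)))) :
    ¬ PPos (add G' (add G (mk [] true))) ∧ ¬ PPos (add G (add G' (mk [] true))) :=
  ⟨not_pPos_of_mem_opts (act_add_add_activeEmpty _ _)
      (mem_opts_add.2 <| .inr ⟨_, mem_opts_add.2 <| .inl ⟨G', hG', rfl⟩, rfl⟩) hP,
    not_pPos_of_mem_opts (act_add_add_activeEmpty _ _)
      (mem_opts_add.2 <| .inl ⟨G', hG', rfl⟩) hP⟩

theorem pPos_add_self_add_activeEmpty (G : AGame) : PPos (add G (add G (mk [] true))) := by
  rw [pPos_iff]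
  refine .inr fun X hX => ?_
  rcases mem_opts_add.1 hX with ⟨G', hG', rfl⟩ | ⟨H, hH, rfl⟩
  · exact (not_pPos_add_add_activeEmpty_of_mem_opts hG' (pPos_add_self_add_activeEmpty G')).1
  · rcases mem_opts_add.1 hH with ⟨G', hG', rfl⟩ | ⟨E, hE, -⟩
    · exact (not_pPos_add_add_activeEmpty_of_mem_opts hG' (pPos_add_self_add_activeEmpty G')).2
    · simp [opts] at hE
termination_by sizeOf G
decreasing_by all_goals exact sizeOf_lt_of_mem ‹_›

end AGame

/-- A game is never equivalent to any of its options; in fact `G + ∅^1` distinguishes them. -/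
theorem AGame.not_equiv_option (G G' : AGame) (h : G' ∈ G.opts) :
    ¬ AGame.Equiv G G' ∧
    ¬ (AGame.PPos (AGame.add G (AGame.add G (AGame.mk [] true))) ↔
       AGame.PPos (AGame.add G' (AGame.add G (AGame.mk [] true)))) := by
  have hN : ¬ AGame.PPos (AGame.add G' (AGame.add G (AGame.mk [] true))) :=
    (AGame.not_pPos_add_add_activeEmpty_of_mem_opts h
      (AGame.pPos_add_self_add_activeEmpty G')).1
  have hdist := fun hiff => hN (Iff.mp hiff (AGame.pPos_add_self_add_activeEmpty G))
  exact ⟨fun hequiv => hdist (hequiv _), hdist⟩
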